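/- arXiv:2308.07866 — 2 statements merged into one kernel-verified Lean document; each statement's English description precedes it below -/
import Mathlib

section
/- Let G be a locally compact, second countable, Hausdorff topological group and let L₀ ∈ 𝒞(G). Let 𝒢_{L₀} := {(g, L) ∈ G × 𝒞(G) : L ∈ Ξ_{L₀} and g ∈ L}, equipped with the subspace topology from G × 𝒞(G) where 𝒞(G) carries the Fell topology. Then the range map r : 𝒢_{L₀} → Ξ_{L₀}, r(g, L) := g·L, is a local homeomorphism if and only if L₀ is uniformly separated. -/
open Set Topology Filter

/-- The space of closed subsets of a topological space `X`. -/
structure ClosedSubsets (X : Type*) [TopologicalSpace X] where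
  carrier : Set X
  isClosed' : IsClosed carrier

namespace ClosedSubsets

variable {X : Type*} [TopologicalSpace X]

/-- The Fell topology on the space of closed subsets. -/
instance : TopologicalSpace (ClosedSubsets X) :=
  TopologicalSpace.generateFrom
    {U | ∃ (K : Set X) (𝓕 : Set (Set X)), IsCompact K ∧ 𝓕.Finite ∧
      (∀ F ∈ 𝓕, IsOpen F ∧ F.Nonempty) ∧
      U = {Y : ClosedSubsets X | Y.carrier ∩ K = ∅ ∧ ∀ F ∈ 𝓕, (Y.carrier ∩ F).Nonempty}}

end ClosedSubsets

variable {G : Type*} [Group G] [TopologicalSpace G] [IsTopologicalGroup G]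

/-- The right action `g • C = C g⁻¹` of a topological group on its closed subsets. -/
def ClosedSubsets.smul (g : G) (C : ClosedSubsets G) : ClosedSubsets G :=
  ⟨(fun x => x * g⁻¹) '' C.carrier, by
    simpa using (Homeomorph.mulRight g⁻¹).isClosedMap _ C.isClosed'⟩

/-- A closed set `L` is `S`-separated if `|L ∩ g·S| ≤ 1` for all `g`. -/
def SSeparated (S L : Set G) : Prop :=
  ∀ g : G, (L ∩ (fun x => x * g⁻¹) '' S).Subsingleton

/-- A closed set is uniformly separated if it is `U`-separated for some nonempty open `U`. -/
def UniformlySeparated (L : Set G) : Prop :=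
  ∃ U : Set G, IsOpen U ∧ U.Nonempty ∧ SSeparated U L

/-- The hull of `L`: the closure of its orbit in the Fell topology. -/
def hull (L : ClosedSubsets G) : Set (ClosedSubsets G) :=
  closure {C | ∃ g : G, C = ClosedSubsets.smul g L}

/-- The standard transversal of `L`. -/
def transversal (L : ClosedSubsets G) : Set (ClosedSubsets G) :=
  {L' | L' ∈ hull L ∧ (1 : G) ∈ L'.carrier}

/-!
Both directions rest on two facts about the Fell topology: `𝒞(X)` is compact, and for locally
compact `G` the action `(g, C) ↦ g • C` is continuous. Hence `Ξ_{L₀}` is compact and contains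
`g • L` whenever `L ∈ Ξ_{L₀}` and `g ∈ L`, so every arrow `(g, L)` of `𝒢_{L₀}` has an inverse
`(g⁻¹, g • L)`.

If `L₀` is `U`-separated, so is every element of its hull, separation being a closed condition.
Let `P` be a translate of `U` containing `g⁻¹`. An arrow `(g, L)` with `g⁻¹ ∈ P` is then recovered
from its range `M = g • L` as the inverse of `(w, M)`, where `w` is the unique point of `M ∩ P`;
since `w` depends continuously on `M`, this is a continuous local inverse of `r`.

Conversely, `r ∘ inv = r ∘ unit ∘ source`, so if `r` is locally injective the unit space `{g = 1}`
is open in `𝒢_{L₀}`. By compactness of `Ξ_{L₀}` and the tube lemma it contains every arrow whose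
`g` lies in some neighbourhood `V` of `1`. If `x, y ∈ L₀ ∩ U g⁻¹` with `U U⁻¹ ⊆ V`, the arrow
`(y x⁻¹, x • L₀)` then forces `x = y`.
-/

namespace ClosedSubsets

variable {X : Type*} [TopologicalSpace X]

theorem isOpen_setOf_inter_eq_empty_and_forall_nonempty {K : Set X} {𝓕 : Set (Set X)}
    (hK : IsCompact K) (h𝓕 : 𝓕.Finite) (hF : ∀ F ∈ 𝓕, IsOpen F ∧ F.Nonempty) :
    IsOpen {Y : ClosedSubsets X | Y.carrier ∩ K = ∅ ∧ ∀ F ∈ 𝓕, (Y.carrier ∩ F).Nonempty} :=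
  TopologicalSpace.isOpen_generateFrom_of_mem ⟨K, 𝓕, hK, h𝓕, hF, rfl⟩

theorem isOpen_setOf_inter_nonempty {F : Set X} (hF : IsOpen F) :
    IsOpen {Y : ClosedSubsets X | (Y.carrier ∩ F).Nonempty} := by
  rcases F.eq_empty_or_nonempty with rfl | hF₀
  · simp
  · simpa using isOpen_setOf_inter_eq_empty_and_forall_nonempty isCompact_empty
      (finite_singleton F) (by simp [hF, hF₀])

theorem isOpen_setOf_disjoint {K : Set X} (hK : IsCompact K) :
    IsOpen {Y : ClosedSubsets X | Disjoint Y.carrier K} := by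
  simpa [Set.disjoint_iff_inter_eq_empty] using
    isOpen_setOf_inter_eq_empty_and_forall_nonempty hK finite_empty (by simp)

theorem isClosed_setOf_mem (x : X) : IsClosed {Y : ClosedSubsets X | x ∈ Y.carrier} := by
  simpa [← isOpen_compl_iff, Set.compl_ofPred] using
    isOpen_setOf_disjoint (isCompact_singleton (x := x))

theorem tendsto_nhds_iff {α : Type*} {l : Filter α} {u : α → ClosedSubsets X}
    {C : ClosedSubsets X} :
    Tendsto u l (𝓝 C) ↔
      (∀ K, IsCompact K → Disjoint C.carrier K → ∀ᶠ a in l, Disjoint (u a).carrier K) ∧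
      (∀ F, IsOpen F → (C.carrier ∩ F).Nonempty → ∀ᶠ a in l, ((u a).carrier ∩ F).Nonempty) := by
  refine ⟨fun h => ⟨fun K hK hCK => h ((isOpen_setOf_disjoint hK).mem_nhds hCK),
    fun F hF hCF => h ((isOpen_setOf_inter_nonempty hF).mem_nhds hCF)⟩, fun ⟨hmiss, hhit⟩ => ?_⟩
  rw [TopologicalSpace.nhds_generateFrom]
  simp only [tendsto_iInf, tendsto_principal]
  rintro _ ⟨hC, K, 𝓕, hK, h𝓕, hF, rfl⟩
  filter_upwards [hmiss K hK (Set.disjoint_iff_inter_eq_empty.2 hC.1),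
    (eventually_all_finite h𝓕).2 fun F hF𝓕 => hhit F (hF F hF𝓕).1 (hC.2 F hF𝓕)] with a hKa hFa
  exact ⟨Set.disjoint_iff_inter_eq_empty.1 hKa, hFa⟩

instance : CompactSpace (ClosedSubsets X) := by
  refine ⟨isCompact_iff_ultrafilter_le_nhds.2 fun 𝒰 _ => ?_⟩
  let S : Set X :=
    {x | ∀ F, IsOpen F → x ∈ F → ∀ᶠ Y : ClosedSubsets X in 𝒰, (Y.carrier ∩ F).Nonempty}
  have hS : IsClosed S := by
    refine isOpen_compl_iff.1 (isOpen_iff_forall_mem_open.2 fun x hx => ?_)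
    simp only [S, mem_compl_iff, mem_ofPred_eq, not_forall] at hx
    obtain ⟨F, hF, hxF, hF𝒰⟩ := hx
    exact ⟨F, fun y hyF hy => hF𝒰 (hy F hF hyF), hF, hxF⟩
  refine ⟨⟨S, hS⟩, mem_univ _, tendsto_nhds_iff.2 ⟨fun K hK hK𝒰 => ?_, ?_⟩⟩
  · -- compactness of `K` reduces missing `K` to missing a neighbourhood of each of its points
    refine hK.induction_on (p := fun s => ∀ᶠ Y : ClosedSubsets X in 𝒰, Disjoint Y.carrier s)
      (by simp) (fun _ _ hst ht => ht.mono fun _ hY => hY.mono_right hst)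
      (fun _ _ hs ht => (hs.and ht).mono fun _ hY => Set.disjoint_union_right.2 hY)
      fun x hxK => ?_
    have hx : x ∉ S := Set.disjoint_right.1 hK𝒰 hxK
    simp only [S, mem_ofPred_eq, not_forall] at hx
    obtain ⟨F, hF, hxF, hF𝒰⟩ := hx
    refine ⟨F, mem_nhdsWithin_of_mem_nhds (hF.mem_nhds hxF), ?_⟩
    simpa [Set.not_nonempty_iff_eq_empty, ← Set.disjoint_iff_inter_eq_empty]
      using Ultrafilter.eventually_not.2 hF𝒰
  · rintro F hF ⟨x, hx, hxF⟩
    exact hx F hF hxF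

theorem continuousAt_of_mem_inter_of_subsingleton {𝒮 : Set (ClosedSubsets X)} {P : Set X}
    (hP : IsOpen P) (h𝒮 : ∀ M ∈ 𝒮, (M.carrier ∩ P).Subsingleton) {w : 𝒮 → X}
    (hw : ∀ M : 𝒮, (M.1.carrier ∩ P).Nonempty → w M ∈ M.1.carrier ∩ P) {M : 𝒮}
    (hM : (M.1.carrier ∩ P).Nonempty) : ContinuousAt w M := by
  refine tendsto_nhds.2 fun N hN hMN => ?_
  filter_upwards [((isOpen_setOf_inter_nonempty (hP.inter hN)).preimage
    continuous_subtype_val).mem_nhds ⟨w M, (hw M hM).1, (hw M hM).2, hMN⟩]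
    with M' ⟨x, hxM', hxP, hxN⟩
  rwa [h𝒮 M'.1 M'.2 ⟨hxM', hxP⟩ (hw M' ⟨x, hxM', hxP⟩)] at hxN

end ClosedSubsets

open scoped Pointwise

namespace ClosedSubsets

instance : MulAction G (ClosedSubsets G) where
  smul := ClosedSubsets.smul
  one_smul C := by cases C; simp [HSMul.hSMul, ClosedSubsets.smul]
  mul_smul a b C := by
    cases C
    simp [HSMul.hSMul, ClosedSubsets.smul, Set.image_mul_right, Set.preimage_preimage, mul_assoc]

theorem mem_smul_iff {g x : G} {C : ClosedSubsets G} :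
    x ∈ (g • C).carrier ↔ x * g ∈ C.carrier := by
  simp [HSMul.hSMul, SMul.smul, ClosedSubsets.smul, Set.image_mul_right]

theorem eventually_smul_inter_nonempty {F : Set G} (hF : IsOpen F) {g₀ : G}
    {C₀ : ClosedSubsets G} (h : ((g₀ • C₀).carrier ∩ F).Nonempty) :
    ∀ᶠ p : G × ClosedSubsets G in 𝓝 (g₀, C₀), ((p.1 • p.2).carrier ∩ F).Nonempty := by
  obtain ⟨y, hy, hyF⟩ := h
  rw [mem_smul_iff] at hy
  have hcont : (fun q : G × G => q.1 * q.2⁻¹) ⁻¹' F ∈ 𝓝 (y * g₀, g₀) :=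
    (continuous_fst.mul continuous_snd.inv).continuousAt.preimage_mem_nhds
      (by simpa using hF.mem_nhds hyF)
  obtain ⟨A, B, hA, hyA, hB, hgB, hAB⟩ := mem_nhds_prod_iff'.1 hcont
  filter_upwards [prod_mem_nhds (hB.mem_nhds hgB)
    ((isOpen_setOf_inter_nonempty hA).mem_nhds ⟨_, hy, hyA⟩)]
  rintro ⟨g, C⟩ ⟨hg, c, hc, hcA⟩
  exact ⟨c * g⁻¹, mem_smul_iff.2 (by simpa using hc), hAB (Set.mk_mem_prod hcA hg)⟩

theorem eventually_disjoint_smul [LocallyCompactSpace G] {K : Set G} (hK : IsCompact K) {g₀ : G}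
    {C₀ : ClosedSubsets G} (h : Disjoint (g₀ • C₀).carrier K) :
    ∀ᶠ p : G × ClosedSubsets G in 𝓝 (g₀, C₀), Disjoint (p.1 • p.2).carrier K := by
  have hK₀ : ∀ᶠ g in 𝓝 g₀, ∀ k ∈ K, k * g ∈ C₀.carrierᶜ :=
    hK.eventually_forall_of_forall_eventually fun k hk =>
      (continuous_snd.mul continuous_fst).continuousAt.preimage_mem_nhds
        (C₀.isClosed'.isOpen_compl.mem_nhds fun hkC =>
          Set.disjoint_right.1 h hk (mem_smul_iff.2 hkC))
  obtain ⟨V, hV, hVK, hVc⟩ := local_compact_nhds hK₀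
  have hKV : Disjoint C₀.carrier (K * V) := by
    rw [Set.disjoint_right]
    rintro _ ⟨k, hk, g, hg, rfl⟩
    exact hVK hg k hk
  filter_upwards [prod_mem_nhds hV ((isOpen_setOf_disjoint (hK.mul hVc)).mem_nhds hKV)]
  rintro ⟨g, C⟩ ⟨hg, hCKV⟩
  exact Set.disjoint_left.2 fun x hx hxK =>
    Set.disjoint_left.1 hCKV (mem_smul_iff.1 hx) (Set.mul_mem_mul hxK hg)

instance [LocallyCompactSpace G] : ContinuousSMul G (ClosedSubsets G) :=
  ⟨continuous_iff_continuousAt.2 fun _ => tendsto_nhds_iff.2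
    ⟨fun _ hK h => eventually_disjoint_smul hK h,
      fun _ hF h => eventually_smul_inter_nonempty hF h⟩⟩

end ClosedSubsets

section Hull

variable {L C : ClosedSubsets G}

theorem smul_mem_hull [LocallyCompactSpace G] (hC : C ∈ hull L) (g : G) : g • C ∈ hull L :=
  map_mem_closure (continuous_const_smul g) hC fun _ ⟨h, hC⟩ =>
    ⟨g * h, by rw [hC]; exact (mul_smul g h L).symm⟩

theorem smul_mem_transversal [LocallyCompactSpace G] {g : G} (hC : C ∈ transversal L)
    (hg : g ∈ C.carrier) : g • C ∈ transversal L :=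
  ⟨smul_mem_hull hC.1 g, ClosedSubsets.mem_smul_iff.2 (by simpa using hg)⟩

theorem smul_self_mem_transversal {x : G} (hx : x ∈ L.carrier) : x • L ∈ transversal L :=
  ⟨subset_closure ⟨x, rfl⟩, ClosedSubsets.mem_smul_iff.2 (by simpa using hx)⟩

theorem isCompact_transversal (L : ClosedSubsets G) : IsCompact (transversal L) :=
  (isClosed_closure.inter (ClosedSubsets.isClosed_setOf_mem 1)).isCompact

end Hull

section Separation

variable {U : Set G} {C L : ClosedSubsets G}

theorem SSeparated.smul (h : SSeparated U C.carrier) (a : G) : SSeparated U (a • C).carrier := by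
  intro g
  refine ((h (a⁻¹ * g)).preimage (mul_left_injective a)).anti ?_
  rintro x ⟨hxC, hxU⟩
  rw [Set.image_mul_right'] at hxU ⊢
  exact ⟨ClosedSubsets.mem_smul_iff.1 hxC, by simpa [mul_assoc] using hxU⟩

theorem isClosed_setOf_sSeparated [T2Space G] (hU : IsOpen U) :
    IsClosed {C : ClosedSubsets G | SSeparated U C.carrier} := by
  refine isOpen_compl_iff.1 (isOpen_iff_mem_nhds.2 fun C hC => ?_)
  simp only [mem_compl_iff, mem_ofPred_eq, SSeparated, not_forall, Set.not_subsingleton_iff] at hC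
  obtain ⟨g, x, ⟨hxC, hxU⟩, y, ⟨hyC, hyU⟩, hxy⟩ := hC
  obtain ⟨O₁, O₂, hO₁, hO₂, hxO₁, hyO₂, hO⟩ := t2_separation hxy
  have hUg : IsOpen ((fun x => x * g⁻¹) '' U) := (isOpenMap_mul_right g⁻¹) U hU
  filter_upwards [(ClosedSubsets.isOpen_setOf_inter_nonempty (hO₁.inter hUg)).mem_nhds
      ⟨x, hxC, hxO₁, hxU⟩, (ClosedSubsets.isOpen_setOf_inter_nonempty (hO₂.inter hUg)).mem_nhds
      ⟨y, hyC, hyO₂, hyU⟩] with Y ⟨x', hx'Y, hx'O, hx'U⟩ ⟨y', hy'Y, hy'O, hy'U⟩ hY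
  exact Set.disjoint_left.1 hO hx'O (hY g ⟨hx'Y, hx'U⟩ ⟨hy'Y, hy'U⟩ ▸ hy'O)

theorem SSeparated.of_mem_hull [T2Space G] (hU : IsOpen U) (hL : SSeparated U L.carrier)
    (hC : C ∈ hull L) : SSeparated U C.carrier :=
  closure_minimal (by rintro _ ⟨g, rfl⟩; exact hL.smul g) (isClosed_setOf_sSeparated hU) hC

end Separation

abbrev TransversalGroupoid (L₀ : ClosedSubsets G) :=
  {p : G × ClosedSubsets G // p.2 ∈ transversal L₀ ∧ p.1 ∈ p.2.carrier}

namespace TransversalGroupoid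

variable {L₀ : ClosedSubsets G}

def source (p : TransversalGroupoid L₀) : transversal L₀ := ⟨p.1.2, p.2.1⟩

def unit (M : transversal L₀) : TransversalGroupoid L₀ := ⟨(1, M.1), M.2, M.2.2⟩

theorem continuous_source : Continuous (source (L₀ := L₀)) := by
  unfold source; fun_prop

theorem continuous_unit : Continuous (unit (L₀ := L₀)) := by
  unfold unit; fun_prop

theorem exists_mem_nhds_one_forall_mem {E : Set (TransversalGroupoid L₀)} (hE : IsOpen E)
    (hunits : ∀ p : TransversalGroupoid L₀, p.1.1 = 1 → p ∈ E) :
    ∃ V ∈ 𝓝 (1 : G), ∀ p : TransversalGroupoid L₀, p.1.1 ∈ V → p ∈ E := by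
  obtain ⟨O, hO, rfl⟩ := isOpen_induced_iff.1 hE
  obtain ⟨V, W, hV, -, hV₁, hW, hVW⟩ := generalized_tube_lemma isCompact_singleton
    (isCompact_transversal L₀) hO
    (by rintro ⟨g, M⟩ ⟨rfl, hM⟩; exact hunits ⟨(1, M), hM, hM.2⟩ rfl)
  exact ⟨V, hV.mem_nhds (hV₁ rfl), fun p hp => hVW ⟨hp, hW p.2.1⟩⟩

theorem uniformlySeparated_of_forall_fst_eq_one {V : Set G} (hV : V ∈ 𝓝 1)
    (h : ∀ p : TransversalGroupoid L₀, p.1.1 ∈ V → p.1.1 = 1) :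
    UniformlySeparated L₀.carrier := by
  obtain ⟨W, hW, hWV⟩ := exists_nhds_split_inv hV
  refine ⟨interior W, isOpen_interior, ⟨1, mem_interior_iff_mem_nhds.2 hW⟩,
    fun g x ⟨hx, hxW⟩ y ⟨hy, hyW⟩ => ?_⟩
  rw [Set.image_mul_right'] at hxW hyW
  have hyx := h ⟨(y * x⁻¹, x • L₀), smul_self_mem_transversal hx,
    ClosedSubsets.mem_smul_iff.2 (by simpa using hy)⟩
    (by simpa [mul_assoc, div_eq_mul_inv] using
      hWV _ (interior_subset hyW) _ (interior_subset hxW))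
  exact (mul_inv_eq_one.1 hyx).symm

variable [LocallyCompactSpace G]

def rangeMap (p : TransversalGroupoid L₀) : transversal L₀ :=
  ⟨p.1.1 • p.1.2, smul_mem_transversal p.2.1 p.2.2⟩

def inv (p : TransversalGroupoid L₀) : TransversalGroupoid L₀ :=
  ⟨(p.1.1⁻¹, p.1.1 • p.1.2), smul_mem_transversal p.2.1 p.2.2,
    ClosedSubsets.mem_smul_iff.2 (by simpa using p.2.1.2)⟩

theorem continuous_rangeMap : Continuous (rangeMap (L₀ := L₀)) := by
  unfold rangeMap; fun_prop

theorem continuous_inv : Continuous (inv (L₀ := L₀)) := by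
  unfold inv; fun_prop

theorem inv_inv (p : TransversalGroupoid L₀) : inv (inv p) = p :=
  Subtype.ext (Prod.ext (_root_.inv_inv _) (inv_smul_smul _ _))

theorem rangeMap_inv (p : TransversalGroupoid L₀) : rangeMap (inv p) = source p :=
  Subtype.ext (inv_smul_smul _ _)

theorem rangeMap_unit (M : transversal L₀) : rangeMap (unit M) = M :=
  Subtype.ext (one_smul _ _)

theorem inv_fst_mem_rangeMap (p : TransversalGroupoid L₀) : p.1.1⁻¹ ∈ (rangeMap p).1.carrier :=
  (inv p).2.2

theorem isOpen_setOf_fst_eq_one (h : IsLocallyInjective (rangeMap (L₀ := L₀))) :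
    IsOpen {p : TransversalGroupoid L₀ | p.1.1 = 1} := by
  convert h.isOpen_eqLocus (continuous_unit.comp continuous_source) continuous_inv
    (funext fun p => (rangeMap_unit _).trans (rangeMap_inv p).symm) using 1
  ext p
  refine ⟨fun (hp : p.1.1 = 1) => Subtype.ext (Prod.ext ?_ ?_), fun hp => ?_⟩
  · simp [unit, inv, hp]
  · simp [unit, source, inv, hp]
  · simpa [unit, inv] using congrArg (fun q => q.1.1) hp

theorem exists_openPartialHomeomorph_rangeMap {P : Set G} (hP : IsOpen P)
    (hPsub : ∀ M ∈ transversal L₀, (M.carrier ∩ P).Subsingleton) :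
    ∃ e : OpenPartialHomeomorph (TransversalGroupoid L₀) (transversal L₀),
      e.source = {p | p.1.1⁻¹ ∈ P} ∧ ⇑e = rangeMap := by
  classical
  have : ∀ M : transversal L₀, ∃ x ∈ M.1.carrier, (M.1.carrier ∩ P).Nonempty → x ∈ P := fun M =>
    if h : (M.1.carrier ∩ P).Nonempty then ⟨h.some, h.some_mem.1, fun _ => h.some_mem.2⟩
    else ⟨1, M.2.2, fun h' => (h h').elim⟩
  -- `w M` is the point of `M ∩ P` if there is one, and lies in `M` in any case, so that
  -- `(w M, M)` is always an arrow
  choose w hwM hwP using this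
  let arrow (M : transversal L₀) : TransversalGroupoid L₀ := ⟨(w M, M.1), M.2, hwM M⟩
  have hw : ∀ p : TransversalGroupoid L₀, p.1.1⁻¹ ∈ P → w (rangeMap p) = p.1.1⁻¹ := fun p hp =>
    hPsub _ (rangeMap p).2 ⟨hwM _, hwP _ ⟨_, inv_fst_mem_rangeMap p, hp⟩⟩
      ⟨inv_fst_mem_rangeMap p, hp⟩
  have hw_cont : ∀ M : transversal L₀, (M.1.carrier ∩ P).Nonempty → ContinuousAt w M :=
    fun M hM => ClosedSubsets.continuousAt_of_mem_inter_of_subsingleton hP hPsub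
      (fun M hM => ⟨hwM M, hwP M hM⟩) hM
  refine ⟨{ toFun := rangeMap
            invFun := fun M => inv (arrow M)
            source := {p | p.1.1⁻¹ ∈ P}
            target := {M | (M.1.carrier ∩ P).Nonempty}
            map_source' := fun p hp => ⟨_, inv_fst_mem_rangeMap p, hp⟩
            map_target' := fun M hM => by simpa [inv, arrow] using hwP M hM
            left_inv' := fun p hp => by
              rw [show arrow (rangeMap p) = inv p from Subtype.ext (Prod.ext (hw p hp) rfl),
                inv_inv]
            right_inv' := fun M _ => rangeMap_inv (arrow M)
            open_source := hP.preimage (by fun_prop)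
            open_target :=
              (ClosedSubsets.isOpen_setOf_inter_nonempty hP).preimage continuous_subtype_val
            continuousOn_toFun := continuous_rangeMap.continuousOn
            continuousOn_invFun := fun M hM => (continuous_inv.continuousAt.comp
              (IsInducing.subtypeVal.continuousAt_iff.2
                ((hw_cont M hM).prodMk continuousAt_subtype_val))).continuousWithinAt },
    rfl, rfl⟩

theorem isLocalHomeomorph_rangeMap [T2Space G] {U : Set G} (hU : IsOpen U) (hU₀ : U.Nonempty)
    (hsep : SSeparated U L₀.carrier) : IsLocalHomeomorph (rangeMap (L₀ := L₀)) := by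
  intro p
  obtain ⟨u, hu⟩ := hU₀
  obtain ⟨e, he, hfe⟩ := exists_openPartialHomeomorph_rangeMap
    ((isOpenMap_mul_right (p.1.1 * u)⁻¹) U hU) fun M hM => hsep.of_mem_hull hU hM.1 (p.1.1 * u)
  exact ⟨e, he ▸ ⟨u, hu, by group⟩, hfe.symm⟩

end TransversalGroupoid

theorem rangeMap_isLocalHomeomorph_iff_uniformlySeparated_general (G : Type*) [Group G]
    [TopologicalSpace G] [IsTopologicalGroup G] [LocallyCompactSpace G]
    [T2Space G] (L₀ : ClosedSubsets G)
    (hmem : ∀ p : {p : G × ClosedSubsets G // p.2 ∈ transversal L₀ ∧ p.1 ∈ p.2.carrier},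
      ClosedSubsets.smul p.1.1 p.1.2 ∈ transversal L₀) :
    IsLocalHomeomorph
      (fun p : {p : G × ClosedSubsets G // p.2 ∈ transversal L₀ ∧ p.1 ∈ p.2.carrier} =>
        (⟨ClosedSubsets.smul p.1.1 p.1.2, hmem p⟩ : transversal L₀)) ↔
    UniformlySeparated L₀.carrier := by
  change IsLocalHomeomorph (TransversalGroupoid.rangeMap (L₀ := L₀)) ↔ _
  refine ⟨fun h => ?_, fun ⟨U, hU, hU₀, hsep⟩ =>
    TransversalGroupoid.isLocalHomeomorph_rangeMap hU hU₀ hsep⟩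
  obtain ⟨V, hV, hVE⟩ := TransversalGroupoid.exists_mem_nhds_one_forall_mem
    (TransversalGroupoid.isOpen_setOf_fst_eq_one h.isLocallyInjective) fun _ => id
  exact TransversalGroupoid.uniformlySeparated_of_forall_fst_eq_one hV hVE

/-- For a lcsc Hausdorff topological group `G` and `L₀ ∈ 𝒞(G)`, the range map
`r(g, L) = g·L` of the groupoid `𝒢_{L₀} = {(g, L) : L ∈ Ξ_{L₀}, g ∈ L}` (with the topology
induced from `G × 𝒞(G)`, Fell topology on the second factor) is a local homeomorphism onto the
standard transversal `Ξ_{L₀}` if and only if `L₀` is uniformly separated.  (The hypothesis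
`hmem`, that the range map indeed takes values in `Ξ_{L₀}`, is a true statement, universally
quantified here so that the map into the subtype can be written down.) -/
theorem rangeMap_isLocalHomeomorph_iff_uniformlySeparated (G : Type*) [Group G]
    [TopologicalSpace G] [IsTopologicalGroup G] [LocallyCompactSpace G]
    [SecondCountableTopology G] [T2Space G] (L₀ : ClosedSubsets G)
    (hmem : ∀ p : {p : G × ClosedSubsets G // p.2 ∈ transversal L₀ ∧ p.1 ∈ p.2.carrier},
      ClosedSubsets.smul p.1.1 p.1.2 ∈ transversal L₀) :
    IsLocalHomeomorph
      (fun p : {p : G × ClosedSubsets G // p.2 ∈ transversal L₀ ∧ p.1 ∈ p.2.carrier} =>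
        (⟨ClosedSubsets.smul p.1.1 p.1.2, hmem p⟩ : transversal L₀)) ↔
    UniformlySeparated L₀.carrier :=
  rangeMap_isLocalHomeomorph_iff_uniformlySeparated_general G L₀ hmem
end

section
/- Let G be a locally compact, second countable, Hausdorff topological group and let L₀ ∈ 𝒞(G) be uniformly separated. Let Ω×_{L₀} := Ω_{L₀} \ {∅} and let H := {(g, L) ∈ G × Ω×_{L₀} : g·L ∈ Ξ_{L₀}}, equipped with the subspace topology from G × 𝒞(G) (Fell topology on the second factor). Then: (i) for every L ∈ Ω×_{L₀} there exists g ∈ G with g·L ∈ Ξ_{L₀}; (ii) the map H → Ω×_{L₀}, (g, L) ↦ L, is an open map; (iii) the map H → Ξ_{L₀}, (g, L) ↦ g·L, is an open map. That is, Ξ_{L₀} is an abstract transversal for the transformation groupoid of the dynamical system (G, Ω×_{L₀}). -/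
open Set Topology Filter

variable {G : Type*} [Group G] [TopologicalSpace G] [IsTopologicalGroup G]

/-- The punctured hull `Ω×_L := Ω_L \ {∅}`. -/
def puncturedHull (L : ClosedSubsets G) : Set (ClosedSubsets G) :=
  hull L \ {⟨∅, isClosed_empty⟩}

/-! Since `e ∈ g·L` iff `g ∈ L`, the space `H` consists of the pairs `(g, L)` with `L` in the hull
and `g ∈ L`; in particular any point of a nonempty `L` moves it into `Ξ_{L₀}`. A basic open set
`(U × O) ∩ H` is mapped by the source map onto the `L ∈ O` that meet `U`, which is Fell-open, and
by the target map onto `Ξ_{L₀} ∩ ⋃_{g ∈ U} g·O`, which is open because each `g·` is continuous. -/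

open TopologicalSpace in
lemma isOpenMap_of_isOpen_image_preimage_prod {α β γ : Type*} [TopologicalSpace α]
    [TopologicalSpace β] [TopologicalSpace γ] {s : Set (α × β)} {f : s → γ}
    (h : ∀ U V, IsOpen U → IsOpen V → IsOpen (f '' (Subtype.val ⁻¹' (U ×ˢ V)))) :
    IsOpenMap f := by
  refine ((isTopologicalBasis_opens.prod isTopologicalBasis_opens).isInducing
    IsInducing.subtypeVal).isOpenMap_iff.mpr ?_
  rintro _ ⟨_, ⟨U, hU, V, hV, rfl⟩, rfl⟩
  exact h U V hU hV

namespace ClosedSubsets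

section

variable {X Y : Type*} [TopologicalSpace X] [TopologicalSpace Y]

@[ext] lemma ext {A B : ClosedSubsets X} (h : A.carrier = B.carrier) : A = B := by
  cases A; cases B; simpa using h

lemma isOpen_setOf_inter_nonempty_s10 {V : Set X} (hV : IsOpen V) :
    IsOpen {C : ClosedSubsets X | (C.carrier ∩ V).Nonempty} := by
  rcases V.eq_empty_or_nonempty with rfl | hne
  · simp
  · apply TopologicalSpace.isOpen_generateFrom_of_mem
    refine ⟨∅, {V}, isCompact_empty, finite_singleton V, by simpa using ⟨hV, hne⟩, ?_⟩
    ext C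
    simp

def comap (f : X → Y) (hf : Continuous f) (C : ClosedSubsets Y) : ClosedSubsets X :=
  ⟨f ⁻¹' C.carrier, C.isClosed'.preimage hf⟩

lemma comap_inter_eq_empty_iff {f : X → Y} (hf : Continuous f) (C : ClosedSubsets Y)
    (K : Set X) : (comap f hf C).carrier ∩ K = ∅ ↔ C.carrier ∩ f '' K = ∅ := by
  simp only [← not_nonempty_iff_eq_empty, comap, inter_comm C.carrier, image_inter_nonempty_iff,
    inter_comm K]

lemma comap_inter_nonempty_iff {f : X → Y} (hf : Continuous f) (C : ClosedSubsets Y)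
    (F : Set X) : ((comap f hf C).carrier ∩ F).Nonempty ↔ (C.carrier ∩ f '' F).Nonempty := by
  simp only [comap, inter_comm C.carrier, image_inter_nonempty_iff, inter_comm F]

/-- Compact and open sets are pushed forward to compact and open sets, so the Fell subbasis
pulls back to the Fell subbasis. -/
lemma continuous_comap {f : X → Y} (hf : Continuous f) (hf' : IsOpenMap f) :
    Continuous (comap f hf) := by
  refine continuous_generateFrom_iff.mpr ?_
  rintro _ ⟨K, 𝓕, hK, h𝓕, hF, rfl⟩
  apply TopologicalSpace.isOpen_generateFrom_of_mem
  refine ⟨f '' K, image f '' 𝓕, hK.image hf, h𝓕.image _, ?_, ?_⟩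
  · rintro _ ⟨F, hF𝓕, rfl⟩
    exact ⟨hf' F (hF F hF𝓕).1, (hF F hF𝓕).2.image f⟩
  · ext C
    exact (comap_inter_eq_empty_iff hf C K).and
      (by simp only [forall_mem_image, comap_inter_nonempty_iff])

end

lemma smul_eq_comap (g : G) (C : ClosedSubsets G) :
    smul g C = comap (· * g) (continuous_mul_const g) C :=
  ext (image_mul_right' (t := C.carrier))

lemma mem_smul_carrier {g x : G} {C : ClosedSubsets G} :
    x ∈ (smul g C).carrier ↔ x * g ∈ C.carrier := by
  rw [smul_eq_comap]; rfl

lemma continuous_const_smul (g : G) : Continuous (smul g : ClosedSubsets G → ClosedSubsets G) := by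
  simpa only [funext (smul_eq_comap g)] using
    continuous_comap (continuous_mul_const g) (Homeomorph.mulRight g).isOpenMap

lemma smul_smul (g h : G) (C : ClosedSubsets G) : smul g (smul h C) = smul (g * h) C := by
  ext x
  simp only [mem_smul_carrier, mul_assoc]

lemma smul_inv_smul (g : G) (C : ClosedSubsets G) : smul g (smul g⁻¹ C) = C := by
  ext x
  simp only [mem_smul_carrier, mul_inv_cancel_right]

lemma inv_smul_smul (g : G) (C : ClosedSubsets G) : smul g⁻¹ (smul g C) = C := by
  simpa using smul_inv_smul g⁻¹ C

end ClosedSubsets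

open ClosedSubsets

lemma smul_mem_hull_s10 {L₀ L : ClosedSubsets G} (hL : L ∈ hull L₀) (g : G) : smul g L ∈ hull L₀ := by
  refine map_mem_closure (continuous_const_smul g) hL ?_
  rintro _ ⟨h, rfl⟩
  exact ⟨g * h, ClosedSubsets.smul_smul g h L₀⟩

lemma mem_puncturedHull_iff {L₀ L : ClosedSubsets G} :
    L ∈ puncturedHull L₀ ↔ L ∈ hull L₀ ∧ L.carrier.Nonempty := by
  refine and_congr_right fun _ => ?_
  rw [mem_singleton_iff, ClosedSubsets.ext_iff, nonempty_iff_ne_empty]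

lemma smul_mem_transversal_iff {L₀ L : ClosedSubsets G} (hL : L ∈ hull L₀) {g : G} :
    smul g L ∈ transversal L₀ ↔ g ∈ L.carrier := by
  rw [transversal, mem_ofPred_eq, mem_smul_carrier, one_mul]
  exact and_iff_right (smul_mem_hull_s10 hL g)

/-- The space `H`. -/
def transversalPairs (L₀ : ClosedSubsets G) : Set (G × ClosedSubsets G) :=
  {p | p.2 ∈ puncturedHull L₀ ∧ smul p.1 p.2 ∈ transversal L₀}

lemma mem_transversalPairs_iff {L₀ : ClosedSubsets G} {p : G × ClosedSubsets G} :
    p ∈ transversalPairs L₀ ↔ p.2 ∈ hull L₀ ∧ p.1 ∈ p.2.carrier := by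
  refine ⟨fun ⟨hp, hpt⟩ => ?_, fun ⟨hp, hg⟩ => ?_⟩
  · have hhull := (mem_puncturedHull_iff.mp hp).1
    exact ⟨hhull, (smul_mem_transversal_iff hhull).mp hpt⟩
  · exact ⟨mem_puncturedHull_iff.mpr ⟨hp, _, hg⟩, (smul_mem_transversal_iff hp).mpr hg⟩

namespace transversalPairs

variable (L₀ : ClosedSubsets G)

def source (p : transversalPairs L₀) : puncturedHull L₀ := ⟨p.1.2, p.2.1⟩

def target (p : transversalPairs L₀) : transversal L₀ := ⟨smul p.1.1 p.1.2, p.2.2⟩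

lemma image_source_preimage_prod (U : Set G) (O : Set (ClosedSubsets G)) :
    source L₀ '' (Subtype.val ⁻¹' (U ×ˢ O)) =
      Subtype.val ⁻¹' (O ∩ {C | (C.carrier ∩ U).Nonempty}) := by
  refine Subset.antisymm ?_ ?_
  · rintro _ ⟨⟨⟨g, L⟩, hp⟩, ⟨hg, hLO⟩, rfl⟩
    exact ⟨hLO, g, (mem_transversalPairs_iff.mp hp).2, hg⟩
  · rintro ⟨L, hL⟩ ⟨hLO, g, hgL, hg⟩
    have hp : (g, L) ∈ transversalPairs L₀ :=
      mem_transversalPairs_iff.mpr ⟨(mem_puncturedHull_iff.mp hL).1, hgL⟩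
    exact ⟨⟨(g, L), hp⟩, ⟨hg, hLO⟩, rfl⟩

lemma image_target_preimage_prod (U : Set G) (O : Set (ClosedSubsets G)) :
    target L₀ '' (Subtype.val ⁻¹' (U ×ˢ O)) =
      Subtype.val ⁻¹' ⋃ g ∈ U, smul g⁻¹ ⁻¹' O := by
  refine Subset.antisymm ?_ ?_
  · rintro _ ⟨⟨⟨g, L⟩, hp⟩, ⟨hg, hLO⟩, rfl⟩
    exact mem_biUnion hg (show smul g⁻¹ (smul g L) ∈ O by rwa [ClosedSubsets.inv_smul_smul])
  · rintro ⟨L, hL⟩ hmem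
    obtain ⟨g, hg, hLO⟩ := mem_iUnion₂.mp hmem
    have hp : (g, smul g⁻¹ L) ∈ transversalPairs L₀ := by
      refine mem_transversalPairs_iff.mpr ⟨smul_mem_hull_s10 hL.1 g⁻¹, ?_⟩
      rw [mem_smul_carrier, mul_inv_cancel]
      exact hL.2
    exact ⟨⟨_, hp⟩, ⟨hg, hLO⟩, Subtype.ext (ClosedSubsets.smul_inv_smul g L)⟩

lemma isOpenMap_source : IsOpenMap (source L₀) :=
  isOpenMap_of_isOpen_image_preimage_prod fun U O hU hO => by
    rw [image_source_preimage_prod]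
    exact (hO.inter (isOpen_setOf_inter_nonempty_s10 hU)).preimage continuous_subtype_val

lemma isOpenMap_target : IsOpenMap (target L₀) :=
  isOpenMap_of_isOpen_image_preimage_prod fun U O hU hO => by
    rw [image_target_preimage_prod]
    exact (isOpen_biUnion fun g _ => hO.preimage (ClosedSubsets.continuous_const_smul g⁻¹)).preimage
      continuous_subtype_val

end transversalPairs

theorem transversal_is_abstract_transversal_general (G : Type*) [Group G] [TopologicalSpace G]
    [IsTopologicalGroup G] (L₀ : ClosedSubsets G) :
    (∀ L ∈ puncturedHull L₀, ∃ g : G, ClosedSubsets.smul g L ∈ transversal L₀) ∧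
    IsOpenMap
      (fun p : {p : G × ClosedSubsets G //
          p.2 ∈ puncturedHull L₀ ∧ ClosedSubsets.smul p.1 p.2 ∈ transversal L₀} =>
        (⟨p.1.2, p.2.1⟩ : puncturedHull L₀)) ∧
    IsOpenMap
      (fun p : {p : G × ClosedSubsets G //
          p.2 ∈ puncturedHull L₀ ∧ ClosedSubsets.smul p.1 p.2 ∈ transversal L₀} =>
        (⟨ClosedSubsets.smul p.1.1 p.1.2, p.2.2⟩ : transversal L₀)) := by
  refine ⟨fun L hL => ?_, transversalPairs.isOpenMap_source L₀,
    transversalPairs.isOpenMap_target L₀⟩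
  obtain ⟨hhull, g, hg⟩ := mem_puncturedHull_iff.mp hL
  exact ⟨g, (smul_mem_transversal_iff hhull).mpr hg⟩

/-- For a lcsc Hausdorff topological group `G` and a uniformly separated
`L₀ ∈ 𝒞(G)`, the standard transversal `Ξ_{L₀}` is an abstract transversal for the transformation
groupoid of `(G, Ω×_{L₀})`: every `G`-orbit in the punctured hull meets `Ξ_{L₀}`, and the source
and range maps restricted to `H = {(g, L) : L ∈ Ω×_{L₀}, g·L ∈ Ξ_{L₀}}` are open. -/
theorem transversal_is_abstract_transversal (G : Type*) [Group G] [TopologicalSpace G]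
    [IsTopologicalGroup G] [LocallyCompactSpace G] [SecondCountableTopology G] [T2Space G]
    (L₀ : ClosedSubsets G) (hsep : UniformlySeparated L₀.carrier) :
    (∀ L ∈ puncturedHull L₀, ∃ g : G, ClosedSubsets.smul g L ∈ transversal L₀) ∧
    IsOpenMap
      (fun p : {p : G × ClosedSubsets G //
          p.2 ∈ puncturedHull L₀ ∧ ClosedSubsets.smul p.1 p.2 ∈ transversal L₀} =>
        (⟨p.1.2, p.2.1⟩ : puncturedHull L₀)) ∧
    IsOpenMap
      (fun p : {p : G × ClosedSubsets G //
          p.2 ∈ puncturedHull L₀ ∧ ClosedSubsets.smul p.1 p.2 ∈ transversal L₀} =>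
        (⟨ClosedSubsets.smul p.1.1 p.1.2, p.2.2⟩ : transversal L₀)) :=
  transversal_is_abstract_transversal_general G L₀
end
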